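/- Let λ ∈ ℂ and set Λ = max{1, |λ|}. There exist constants C > 0 and ρ₀ > 0 (depending only on λ) such that for every ρ ≥ ρ₀ and all natural numbers n, k with |n − 2√Λ·ρ| ≤ 1 and |k − 12√Λ·√ρ| ≤ 1, the following holds. Set b = (ρ + √ρ)^{−2k}·μ_n(ρ + √ρ)/μ_{n−2k}(ρ + √ρ) and define R(r) = b·r^{2k}·μ_{n−2k}(r)/μ_n(r). Then |R(r)| ≤ e^{−C} for all r ∈ [ρ, ρ + (2/3)√ρ], and |R(r)| ≥ e^{C} for all r ∈ [ρ + (4/3)√ρ, ρ + 2√ρ]. -/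

import Mathlib

noncomputable section

/-- `μ_n(r) = exp(n·[Log(√(1 − λr²/n²) + 1) − √(1 − λr²/n²) − Log 2 + 1])`,
where `Log` and `√` (i.e. `cpow (1/2)`) are the principal branches. -/
def mu (lam : ℂ) (n : ℕ) (r : ℝ) : ℂ :=
  Complex.exp ((n : ℂ) *
    (Complex.log ((1 - lam * (r : ℂ) ^ 2 / (n : ℂ) ^ 2) ^ ((1 : ℂ) / 2) + 1)
      - (1 - lam * (r : ℂ) ^ 2 / (n : ℂ) ^ 2) ^ ((1 : ℂ) / 2)
      - Complex.log 2 + 1))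

/-!
Write `μ_m = exp E_m` and `F x = 2k log x + Re E_{n-2k} x - Re E_n x`, so that
`log |R r| = F r - F (ρ + √ρ)`. With `w_m x = √(1 - λx²/m²)` one has `E_m' x = m (1 - w_m x) / x`,
and since `n - (n - 2k) = 2k` this gives `F' x = Re (n w_n x - (n - 2k) w_{n-2k} x) / x`.
The two terms are square roots of `n² - λx²` and `(n - 2k)² - λx²`, so their difference is
`(n² - (n - 2k)²) / (n w_n + (n - 2k) w_{n-2k})`. For `n ≈ 2√Λ ρ` and `x ≈ ρ` we have
`|λx²/m²| ≤ 1/3`, hence `w_m` is within `1/3` of `1` and the real part is at least `k`.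
Thus `F' ≥ k/x ≥ 3/√ρ` on `[ρ, ρ + 2√ρ]`, and moving `√ρ/3` away from `ρ + √ρ` changes `F`
by at least `1`: the theorem holds with `C = 1`.
-/

lemma Convex.mul_sub_le_sub_of_hasDerivAt {D : Set ℝ} (hD : Convex ℝ D) {f f' : ℝ → ℝ} {c : ℝ}
    (hf : ∀ x ∈ D, HasDerivAt f (f' x) x) (hc : ∀ x ∈ D, c ≤ f' x) {x y : ℝ} (hx : x ∈ D)
    (hy : y ∈ D) (hxy : x ≤ y) : c * (y - x) ≤ f y - f x :=
  hD.mul_sub_le_image_sub_of_le_deriv (fun t ht => (hf t ht).continuousAt.continuousWithinAt)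
    (fun t ht => (hf t (interior_subset ht)).differentiableAt.differentiableWithinAt)
    (fun t ht => (hf t (interior_subset ht)).deriv ▸ hc t (interior_subset ht)) x hx y hy hxy

namespace Complex

lemma re_cpow_one_half_nonneg (z : ℂ) : 0 ≤ (z ^ ((1 : ℂ) / 2)).re := by
  rw [one_div, cpow_inv_two_re]
  exact Real.sqrt_nonneg _

lemma cpow_one_half_mul_self (z : ℂ) : z ^ ((1 : ℂ) / 2) * z ^ ((1 : ℂ) / 2) = z := by
  rw [← sq, one_div]
  exact cpow_ofNat_inv_pow z 2

lemma one_le_norm_cpow_one_half_add_one (z : ℂ) : 1 ≤ ‖z ^ ((1 : ℂ) / 2) + 1‖ :=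
  calc (1 : ℝ) ≤ (z ^ ((1 : ℂ) / 2) + 1).re := by
        rw [add_re, one_re]; linarith [re_cpow_one_half_nonneg z]
    _ ≤ _ := re_le_norm _

lemma norm_cpow_one_half_one_sub_sub_one_le (σ : ℂ) :
    ‖(1 - σ) ^ ((1 : ℂ) / 2) - 1‖ ≤ ‖σ‖ := by
  set w := (1 - σ) ^ ((1 : ℂ) / 2)
  have hw : (w - 1) * (w + 1) = -σ := by
    linear_combination cpow_one_half_mul_self (1 - σ)
  calc ‖w - 1‖ ≤ ‖w - 1‖ * ‖w + 1‖ :=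
        le_mul_of_one_le_right (norm_nonneg _) (one_le_norm_cpow_one_half_add_one _)
    _ = ‖σ‖ := by rw [← norm_mul, hw, norm_neg]

lemma one_half_le_re_inv {q : ℂ} (hq : ‖q - 1‖ ≤ 1 / 3) : 1 / 2 ≤ q⁻¹.re := by
  have hq_norm : 2 / 3 ≤ ‖q‖ := by
    have := norm_sub_norm_le 1 (1 - q)
    rw [norm_sub_rev] at hq
    simp only [norm_one, sub_sub_cancel] at this
    linarith
  have hq0 : q ≠ 0 := norm_pos_iff.1 (by linarith)
  have hinv : ‖q⁻¹ - 1‖ ≤ 1 / 2 := by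
    rw [show q⁻¹ - 1 = (1 - q) / q by field_simp, norm_div, norm_sub_rev,
      div_le_iff₀ (by linarith)]
    linarith
  have := abs_le.1 ((abs_re_le_norm _).trans hinv)
  simp only [sub_re, one_re] at this
  linarith

/-- `a - b = (p - q) * Q⁻¹` with `Q = (a + b) / (p + q)` within `1 / 3` of `1`. -/
lemma half_sub_le_re_sub {a b : ℂ} {p q : ℝ} (hp : 0 < p) (hq : 0 ≤ q) (hqp : q ≤ p)
    (hsq : a ^ 2 - b ^ 2 = p ^ 2 - q ^ 2) (ha : ‖a - p‖ ≤ p / 3) (hb : ‖b - q‖ ≤ q / 3) :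
    (p - q) / 2 ≤ (a - b).re := by
  have hpq : 0 < p + q := by linarith
  have hpq' : ((p + q : ℝ) : ℂ) ≠ 0 := ofReal_ne_zero.2 hpq.ne'
  set Q : ℂ := (a + b) / (p + q : ℝ)
  have hQ : ‖Q - 1‖ ≤ 1 / 3 := by
    have : Q - 1 = ((a - p) + (b - q)) / (p + q : ℝ) := by
      simp only [Q]; field_simp; push_cast; ring
    rw [this, norm_div, norm_real, Real.norm_of_nonneg hpq.le, div_le_iff₀ hpq]
    linarith [norm_add_le (a - p) (b - q)]
  have hQ0 : Q ≠ 0 := by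
    rintro h
    rw [h, zero_sub, norm_neg, norm_one] at hQ
    norm_num at hQ
  have hab : a - b = (p - q : ℝ) * Q⁻¹ := by
    have hsum : a + b = (p + q : ℝ) * Q := by
      simp only [Q]; field_simp
    have : (a - b) * ((p + q : ℝ) * Q) = (p - q : ℝ) * (p + q : ℝ) := by
      rw [← hsum]; push_cast; linear_combination hsq
    rw [eq_mul_inv_iff_mul_eq₀ hQ0]
    exact mul_left_cancel₀ hpq' (by linear_combination this)
  rw [hab, re_ofReal_mul]
  nlinarith [one_half_le_re_inv hQ]

lemma one_sub_mem_slitPlane {σ : ℂ} (h : ‖σ‖ < 1) : 1 - σ ∈ slitPlane := by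
  rw [sub_eq_add_neg]
  exact mem_slitPlane_of_norm_lt_one (by rwa [norm_neg])

end Complex

def muSqrt (lam : ℂ) (m : ℕ) (z : ℂ) : ℂ := (1 - lam * z ^ 2 / (m : ℂ) ^ 2) ^ ((1 : ℂ) / 2)

/-- Chosen so that `mu lam m r = Complex.exp (muExponent lam m r)` definitionally. -/
def muExponent (lam : ℂ) (m : ℕ) (z : ℂ) : ℂ :=
  m * (Complex.log (muSqrt lam m z + 1) - muSqrt lam m z - Complex.log 2 + 1)

lemma norm_mu (lam : ℂ) (m : ℕ) (r : ℝ) : ‖mu lam m r‖ = Real.exp (muExponent lam m r).re :=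
  Complex.norm_exp _

open Complex in
lemma hasDerivAt_muExponent (lam : ℂ) (m : ℕ) {z : ℂ} (hz : z ≠ 0)
    (hslit : 1 - lam * z ^ 2 / (m : ℂ) ^ 2 ∈ slitPlane) :
    HasDerivAt (muExponent lam m) (m * (1 - muSqrt lam m z) / z) z := by
  -- with `c = λ / m²` as an opaque constant, the case `m = 0` needs no separate treatment
  set c : ℂ := lam / (m : ℂ) ^ 2
  have hc : ∀ z : ℂ, lam * z ^ 2 / (m : ℂ) ^ 2 = c * z ^ 2 := fun z => mul_div_right_comm _ _ _
  clear_value c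
  simp only [hc] at hslit
  set w := muSqrt lam m z with hw_def
  have hw : w = (1 - c * z ^ 2) ^ ((1 : ℂ) / 2) := by rw [hw_def, muSqrt, hc]
  have hw_sq : w * w = 1 - c * z ^ 2 := by rw [hw]; exact cpow_one_half_mul_self _
  have hw0 : w ≠ 0 := by
    rintro h
    rw [h, zero_mul] at hw_sq
    exact slitPlane_ne_zero hslit hw_sq.symm
  have hw1 : w + 1 ∈ slitPlane := by
    refine mem_slitPlane_iff.2 (Or.inl ?_)
    rw [add_re, one_re, hw]; linarith [re_cpow_one_half_nonneg (1 - c * z ^ 2)]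
  have hu : HasDerivAt (fun z : ℂ => 1 - c * z ^ 2) (-(c * (2 * z))) z := by
    simpa using ((hasDerivAt_pow 2 z).const_mul c).const_sub 1
  have hsqrt : HasDerivAt (muSqrt lam m) (-(c * z) / w) z := by
    have := hu.cpow_const (c := (1 : ℂ) / 2) hslit
    rw [show (1 : ℂ) / 2 - 1 = -(1 / 2) by norm_num, cpow_neg, ← hw] at this
    convert this using 1
    · funext z; rw [muSqrt, hc]
    · field_simp
  have hlog := (hsqrt.add_const 1).clog hw1
  have hderiv : (m : ℂ) * (1 - w) / z = m * (-(c * z) / w / (w + 1) - -(c * z) / w) := by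
    field_simp [slitPlane_ne_zero hw1]
    linear_combination (-(m * w)) * hw_sq
  rw [hderiv]
  exact (((hlog.sub hsqrt).sub_const (Complex.log 2)).add_const 1).const_mul (m : ℂ)

lemma natCast_mul_muSqrt_sq (lam : ℂ) {m : ℕ} (hm : m ≠ 0) (z : ℂ) :
    ((m : ℂ) * muSqrt lam m z) ^ 2 = (m : ℂ) ^ 2 - lam * z ^ 2 := by
  rw [mul_pow, sq (muSqrt lam m z), muSqrt, Complex.cpow_one_half_mul_self]
  field_simp

lemma norm_mul_sq_div_sq_le_one_third {lam : ℂ} {m : ℕ} {x : ℝ}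
    (h : 3 * ‖lam‖ * x ^ 2 ≤ (m : ℝ) ^ 2) : ‖lam * (x : ℂ) ^ 2 / (m : ℂ) ^ 2‖ ≤ 1 / 3 := by
  rw [norm_div, norm_mul, norm_pow, norm_pow, Complex.norm_real, Complex.norm_natCast,
    Real.norm_eq_abs, sq_abs]
  rcases eq_or_ne m 0 with rfl | hm
  · norm_num
  · rw [div_le_iff₀ (by positivity)]
    linarith

lemma mem_slitPlane_of_three_mul_le {lam : ℂ} {m : ℕ} {x : ℝ}
    (h : 3 * ‖lam‖ * x ^ 2 ≤ (m : ℝ) ^ 2) :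
    1 - lam * (x : ℂ) ^ 2 / (m : ℂ) ^ 2 ∈ Complex.slitPlane :=
  Complex.one_sub_mem_slitPlane ((norm_mul_sq_div_sq_le_one_third h).trans_lt (by norm_num))

lemma norm_natCast_mul_muSqrt_sub_le {lam : ℂ} {m : ℕ} {x : ℝ}
    (h : 3 * ‖lam‖ * x ^ 2 ≤ (m : ℝ) ^ 2) : ‖(m : ℂ) * muSqrt lam m x - m‖ ≤ m / 3 := by
  rw [← mul_sub_one, norm_mul, Complex.norm_natCast, div_eq_mul_one_div]
  gcongr
  exact (Complex.norm_cpow_one_half_one_sub_sub_one_le _).trans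
    (norm_mul_sq_div_sq_le_one_third h)

/-- `log ‖R x‖` up to an additive constant. -/
def logRatio (lam : ℂ) (n k : ℕ) (x : ℝ) : ℝ :=
  2 * k * Real.log x + (muExponent lam (n - 2 * k) x).re - (muExponent lam n x).re

lemma norm_ratio_eq_exp_sub_logRatio (lam : ℂ) (n k : ℕ) {r r₁ : ℝ} (hr : 0 < r) (hr₁ : 0 < r₁) :
    ‖((r₁ : ℂ) ^ (-(2 * k : ℤ)) * (mu lam n r₁ / mu lam (n - 2 * k) r₁)) *
        (r : ℂ) ^ (2 * k) * (mu lam (n - 2 * k) r / mu lam n r)‖ =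
      Real.exp (logRatio lam n k r - logRatio lam n k r₁) := by
  have hpow : ∀ {x : ℝ}, 0 < x → x ^ (2 * k) = Real.exp (2 * k * Real.log x) := fun hx => by
    rw [show (2 * k : ℝ) * Real.log _ = ((2 * k : ℕ) : ℝ) * Real.log _ by push_cast; ring,
      Real.exp_nat_mul, Real.exp_log hx]
  rw [show -(2 * k : ℤ) = -((2 * k : ℕ) : ℤ) by push_cast; ring, zpow_neg, zpow_natCast]
  simp only [norm_mul, norm_div, norm_inv, norm_pow, Complex.norm_real,
    Real.norm_of_nonneg hr.le, Real.norm_of_nonneg hr₁.le, norm_mu]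
  rw [hpow hr, hpow hr₁]
  simp only [logRatio, Real.exp_sub, Real.exp_add]
  field_simp

def logRatioDeriv (lam : ℂ) (n k : ℕ) (x : ℝ) : ℝ :=
  ((n : ℂ) * muSqrt lam n x - ((n - 2 * k : ℕ) : ℂ) * muSqrt lam (n - 2 * k) x).re / x

lemma hasDerivAt_logRatio (lam : ℂ) {n k : ℕ} (hkn : 2 * k ≤ n) {x : ℝ} (hx : 0 < x)
    (hn : 1 - lam * (x : ℂ) ^ 2 / (n : ℂ) ^ 2 ∈ Complex.slitPlane)
    (hn' : 1 - lam * (x : ℂ) ^ 2 / ((n - 2 * k : ℕ) : ℂ) ^ 2 ∈ Complex.slitPlane) :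
    HasDerivAt (logRatio lam n k) (logRatioDeriv lam n k x) x := by
  have hx' : (x : ℂ) ≠ 0 := Complex.ofReal_ne_zero.2 hx.ne'
  have hlog := (Real.hasDerivAt_log hx.ne').const_mul (2 * k : ℝ)
  have hdn := (hasDerivAt_muExponent lam n hx' hn).real_of_complex
  have hdn' := (hasDerivAt_muExponent lam (n - 2 * k) hx' hn').real_of_complex
  refine ((hlog.add hdn').sub hdn).congr_deriv ?_
  simp only [logRatioDeriv, Nat.cast_sub hkn, Nat.cast_mul, Nat.cast_ofNat,
    Complex.div_ofReal_re, Complex.mul_re, Complex.sub_re, Complex.natCast_re, Complex.re_ofNat,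
    Complex.im_ofNat, Complex.natCast_im, mul_zero, sub_zero, Complex.one_re, Complex.sub_im,
    Complex.mul_im, zero_mul, add_zero, sub_self, Complex.one_im, zero_sub, mul_neg, neg_zero]
  field_simp
  ring

lemma div_le_logRatioDeriv {lam : ℂ} {n k : ℕ} (hkn : 2 * k < n) {x : ℝ} (hx : 0 < x)
    (hsmall : 3 * ‖lam‖ * x ^ 2 ≤ ((n - 2 * k : ℕ) : ℝ) ^ 2) :
    k / x ≤ logRatioDeriv lam n k x := by
  have hcast : ((n - 2 * k : ℕ) : ℝ) = n - 2 * k := by push_cast [hkn.le]; ring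
  have hn0 : n ≠ 0 := by omega
  have hn2 : n - 2 * k ≠ 0 := by omega
  have hle : ((n - 2 * k : ℕ) : ℝ) ≤ n := Nat.cast_le.2 (Nat.sub_le _ _)
  have hsmall' : 3 * ‖lam‖ * x ^ 2 ≤ (n : ℝ) ^ 2 := hsmall.trans (by gcongr)
  refine div_le_div_of_nonneg_right ?_ hx.le
  have key := Complex.half_sub_le_re_sub (a := (n : ℂ) * muSqrt lam n x)
    (b := ((n - 2 * k : ℕ) : ℂ) * muSqrt lam (n - 2 * k) x) (p := n) (q := ((n - 2 * k : ℕ) : ℝ))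
    (by positivity) (by positivity) hle
    (by rw [natCast_mul_muSqrt_sq lam hn0, natCast_mul_muSqrt_sq lam hn2]; push_cast; ring)
    (by simpa using norm_natCast_mul_muSqrt_sub_le hsmall')
    (by simpa using norm_natCast_mul_muSqrt_sub_le hsmall)
  rw [hcast] at key
  linarith

open Set in
lemma scaling_bounds {lam : ℂ} {ρ : ℝ} {n k : ℕ} (hρ : 10 ^ 5 ≤ ρ)
    (hn : |(n : ℝ) - 2 * √(max 1 ‖lam‖) * ρ| ≤ 1)
    (hk : |(k : ℝ) - 12 * √(max 1 ‖lam‖) * √ρ| ≤ 1) :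
    2 * k < n ∧ ∀ x ∈ Icc ρ (ρ + 2 * √ρ),
      3 * ‖lam‖ * x ^ 2 ≤ ((n - 2 * k : ℕ) : ℝ) ^ 2 ∧ 3 / √ρ ≤ k / x := by
  set L := √(max 1 ‖lam‖)
  have hL : 1 ≤ L := Real.one_le_sqrt.2 (le_max_left _ _)
  have hlam : ‖lam‖ ≤ L ^ 2 := by
    rw [Real.sq_sqrt (zero_le_one.trans (le_max_left _ _))]; exact le_max_right _ _
  set s := √ρ
  have hs : s ^ 2 = ρ := Real.sq_sqrt (by linarith)
  have hs316 : 316 ≤ s := Real.le_sqrt_of_sq_le (by linarith)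
  rw [← hs] at hn ⊢
  obtain ⟨hn₁, -⟩ := abs_le.1 hn
  obtain ⟨hk₁, hk₂⟩ := abs_le.1 hk
  have hLs : 316 ≤ L * s := by nlinarith
  have hm : L * (2 * s ^ 2 - 24 * s) - 3 ≤ (n : ℝ) - 2 * k := by linarith
  have hkn : 2 * k < n := by
    have : (2 * k : ℝ) < n := by nlinarith
    exact_mod_cast this
  refine ⟨hkn, fun x ⟨hx₁, hx₂⟩ => ⟨?_, ?_⟩⟩
  · have hx : 0 ≤ x := (sq_nonneg s).trans hx₁
    have h7 : 7 * L * x ≤ 4 * ((n : ℝ) - 2 * k) := by nlinarith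
    have h49 := mul_self_le_mul_self (by positivity) h7
    have hlamx := mul_le_mul_of_nonneg_right hlam (sq_nonneg x)
    rw [Nat.cast_sub hkn.le]
    push_cast
    nlinarith
  · rw [div_le_div_iff₀ (by linarith) ((by positivity : (0 : ℝ) < s ^ 2).trans_le hx₁)]
    nlinarith

open Set in
lemma one_le_logRatio_sub {lam : ℂ} {ρ : ℝ} {n k : ℕ} (hρ : 10 ^ 5 ≤ ρ)
    (hn : |(n : ℝ) - 2 * √(max 1 ‖lam‖) * ρ| ≤ 1)
    (hk : |(k : ℝ) - 12 * √(max 1 ‖lam‖) * √ρ| ≤ 1) {x y : ℝ}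
    (hx : x ∈ Icc ρ (ρ + 2 * √ρ)) (hy : y ∈ Icc ρ (ρ + 2 * √ρ)) (hxy : x + √ρ / 3 ≤ y) :
    1 ≤ logRatio lam n k y - logRatio lam n k x := by
  obtain ⟨hkn, hbounds⟩ := scaling_bounds hρ hn hk
  have hs : 0 < √ρ := Real.sqrt_pos.2 (by linarith)
  have hpos : ∀ t ∈ Icc ρ (ρ + 2 * √ρ), 0 < t := fun t ht => by linarith [ht.1]
  have hderiv : ∀ t ∈ Icc ρ (ρ + 2 * √ρ),
      HasDerivAt (logRatio lam n k) (logRatioDeriv lam n k t) t := fun t ht =>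
    hasDerivAt_logRatio lam hkn.le (hpos t ht)
      (mem_slitPlane_of_three_mul_le ((hbounds t ht).1.trans (by gcongr; omega)))
      (mem_slitPlane_of_three_mul_le (hbounds t ht).1)
  have hslope : ∀ t ∈ Icc ρ (ρ + 2 * √ρ), 3 / √ρ ≤ logRatioDeriv lam n k t := fun t ht =>
    (hbounds t ht).2.trans (div_le_logRatioDeriv hkn (hpos t ht) (hbounds t ht).1)
  calc (1 : ℝ) = 3 / √ρ * (√ρ / 3) := by field_simp
    _ ≤ 3 / √ρ * (y - x) := by gcongr; linarith
    _ ≤ _ := (convex_Icc _ _).mul_sub_le_sub_of_hasDerivAt hderiv hslope hx hy (by linarith)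

theorem stmt17 (lam : ℂ) :
    ∃ (C ρ₀ : ℝ), 0 < C ∧ 0 < ρ₀ ∧
      ∀ ρ : ℝ, ρ₀ ≤ ρ → ∀ n k : ℕ,
        |(n : ℝ) - 2 * Real.sqrt (max 1 ‖lam‖) * ρ| ≤ 1 →
        |(k : ℝ) - 12 * Real.sqrt (max 1 ‖lam‖) * Real.sqrt ρ| ≤ 1 →
        (∀ r ∈ Set.Icc ρ (ρ + 2 / 3 * Real.sqrt ρ),
          ‖(((ρ + Real.sqrt ρ : ℝ) : ℂ) ^ (-(2 * k : ℤ)) *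
              (mu lam n (ρ + Real.sqrt ρ) / mu lam (n - 2 * k) (ρ + Real.sqrt ρ))) *
            (r : ℂ) ^ (2 * k) * (mu lam (n - 2 * k) r / mu lam n r)‖ ≤ Real.exp (-C)) ∧
        (∀ r ∈ Set.Icc (ρ + 4 / 3 * Real.sqrt ρ) (ρ + 2 * Real.sqrt ρ),
          Real.exp C ≤
            ‖(((ρ + Real.sqrt ρ : ℝ) : ℂ) ^ (-(2 * k : ℤ)) *
                (mu lam n (ρ + Real.sqrt ρ) / mu lam (n - 2 * k) (ρ + Real.sqrt ρ))) *
              (r : ℂ) ^ (2 * k) * (mu lam (n - 2 * k) r / mu lam n r)‖) := by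
  refine ⟨1, 10 ^ 5, one_pos, by norm_num, fun ρ hρ n k hn hk => ?_⟩
  set s := √ρ
  have hs : 0 < s := Real.sqrt_pos.2 (by linarith)
  have hmid : ρ + s ∈ Set.Icc ρ (ρ + 2 * s) := ⟨by linarith, by linarith⟩
  constructor
  · rintro r ⟨hr₁, hr₂⟩
    rw [norm_ratio_eq_exp_sub_logRatio lam n k (by linarith) (by linarith), Real.exp_le_exp]
    linarith [one_le_logRatio_sub hρ hn hk ⟨hr₁, by linarith⟩ hmid (by linarith)]
  · rintro r ⟨hr₁, hr₂⟩
    rw [norm_ratio_eq_exp_sub_logRatio lam n k (by linarith) (by linarith), Real.exp_le_exp]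
    linarith [one_le_logRatio_sub hρ hn hk hmid ⟨by linarith, hr₂⟩ (by linarith)]
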